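/- arXiv:astro-ph/0203274 — 2 statements merged into one kernel-verified Lean document; each statement's English description precedes it below -/
import Mathlib

section
/- Assume Q satisfies (Q1): there are constants C > 0, F > 0 and 0 < k < 3/2 such that Q(f,P) ≥ C f^{1+1/k} for all f ≥ F and all P ∈ ℝ, and set n := k + 3/2 (so n < 3). Then there is a constant C₂ > 0 depending only on Q and M such that for every nonnegative measurable f on ℝ³×ℝ³ with ∫∫ f dv dx = M one has ∫_{ℝ³} ρ_f(x)^{1+1/n} dx ≤ C₂ (1 + E_kin(f) + 𝒞(f)). -/
/-! Fix `x` and split the velocity integral of `f(x, ·)` at `|v| = R`. On the ball, Hölder's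
inequality with exponents `1 + 1/k` and `k + 1` bounds it by
`(∫ f^{1+1/k} dv)^{k/(k+1)} |B_R|^{1/(k+1)}`; outside, `1 ≤ |v|²/R²` bounds it by
`R⁻² ∫ |v|² f dv`. Choosing `R² = ρ(x)^{1/n}` gives `ρ(x)^{1+1/n} ≲ ∫ f^{1+1/k} dv + ∫ |v|² f dv`.
Integrating in `x`, the second term becomes `2 E_kin(f)`, and since (Q1) gives
`f^{1+1/k} ≤ F^{1/k} f + Q(f, P)/C` pointwise, the first is at most `F^{1/k} M + 𝒞(f)/C`. -/

open MeasureTheory Real Filter Topology ENNReal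

noncomputable section

abbrev E3 := EuclideanSpace ℝ (Fin 3)

/-- third component of the angular momentum, P(x,v) = x₁v₂ − x₂v₁ -/
def angmom (z : E3 × E3) : ℝ := z.1 0 * z.2 1 - z.1 1 * z.2 0

/-- induced spatial density ρ_f (as an extended-real valued integral) -/
def rhoL (f : E3 × E3 → ℝ) (x : E3) : ℝ≥0∞ := ∫⁻ v : E3, ENNReal.ofReal (f (x, v))

/-- kinetic energy E_kin(f) = ½∫∫ |v|² f -/
def EkinL (f : E3 × E3 → ℝ) : ℝ≥0∞ :=
  (1/2 : ℝ≥0∞) * ∫⁻ z : E3 × E3, ENNReal.ofReal (‖z.2‖^2 * f z)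

/-- Casimir functional 𝒞(f) = ∫∫ Q(f,P) -/
def CasimirL (Q : ℝ → ℝ → ℝ) (f : E3 × E3 → ℝ) : ℝ≥0∞ :=
  ∫⁻ z : E3 × E3, ENNReal.ofReal (Q (f z) (angmom z))

open Metric Module

lemma Real.rpow_le_of_forall_le_holder_add_tail {d : ℕ} {k κ m Z a : ℝ} (hk : 0 < k)
    (hκ : 0 ≤ κ) (hm : 0 ≤ m) (hZ : 0 ≤ Z) (ha : 0 ≤ a)
    (H : ∀ R : ℝ, 0 < R →
      m ≤ Z ^ (1 / (1 + 1/k)) * (R ^ d * κ) ^ (1 / (k + 1)) + (R ^ 2)⁻¹ * a) :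
    m ^ (1 + 1 / (k + d/2)) ≤ (2 ^ (1 + 1/k) * κ ^ (1/k) + 2) * (Z + a) := by
  rcases hm.eq_or_lt with rfl | hm
  · rw [Real.zero_rpow (by positivity)]; positivity
  set n := k + d/2 with hn
  have hn0 : 0 < n := by positivity
  -- with `R² = m^(1/n)` both `m R²` and `m^(1+1/k) / R^(d/k)` equal `m^(1+1/n)`; this is where
  -- `n = k + d/2` comes from
  set R := m ^ (1 / (2 * n))
  have hR : 0 < R := Real.rpow_pos_of_pos hm _
  have hRpow (j : ℕ) : R ^ j = m ^ (j / (2 * n)) := by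
    rw [← Real.rpow_natCast, ← Real.rpow_mul hm.le]; ring_nf
  have hc : 0 ≤ 2 ^ (1 + 1/k) * κ ^ (1/k) := by positivity
  rcases le_total (m/2) ((R ^ 2)⁻¹ * a) with htail | hholder
  · have hθ : m ^ (1 + 1/n) = m * R ^ 2 := by
      rw [hRpow, Real.rpow_add hm, Real.rpow_one]; congr 2; field_simp; norm_num
    rw [inv_mul_eq_div, le_div_iff₀ (by positivity)] at htail
    rw [hθ]
    nlinarith [mul_nonneg hc hZ, mul_nonneg hc ha]
  · have hhalf : m / 2 ≤ Z ^ (1 / (1 + 1/k)) * (R ^ d * κ) ^ (1 / (k + 1)) := by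
      linarith [H R hR]
    set p := 1 + 1/k with hp
    set e := d / (2 * n * k) with he
    have hp0 : 0 < p := by positivity
    have hmp : m ^ p = m ^ (1 + 1/n) * m ^ e := by
      rw [← Real.rpow_add hm]; congr 1; rw [hp, he, hn]; field_simp; ring
    have hpow_le : m ^ (1 + 1/n) * m ^ e ≤ 2 ^ p * κ ^ (1/k) * Z * m ^ e := by
      have := Real.rpow_le_rpow (by positivity) hhalf hp0.le
      rw [Real.div_rpow hm.le zero_le_two, hmp, div_le_iff₀ (by positivity),
        Real.mul_rpow (by positivity) (by positivity), ← Real.rpow_mul hZ,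
        ← Real.rpow_mul (by positivity), Real.mul_rpow (by positivity) hκ, hRpow,
        ← Real.rpow_mul hm.le] at this
      have hpq : 1 / (k + 1) * p = 1 / k := by rw [hp]; field_simp
      have hde : (d : ℝ) / (2 * n) * (1 / k) = e := by rw [he]; field_simp
      rw [one_div_mul_cancel hp0.ne', Real.rpow_one, hpq, hde] at this
      linarith
    have := le_of_mul_le_mul_right hpow_le (Real.rpow_pos_of_pos hm e)
    nlinarith [mul_nonneg hc hZ]

lemma ENNReal.rpow_le_of_forall_le_holder_add_tail {d : ℕ} {k κ : ℝ} {m Z a : ℝ≥0∞}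
    (hk : 0 < k) (hκ : 0 ≤ κ)
    (H : ∀ R : ℝ, 0 < R →
      m ≤ Z ^ (1 / (1 + 1/k)) * ENNReal.ofReal (R ^ d * κ) ^ (1 / (k + 1))
        + ENNReal.ofReal (R ^ 2)⁻¹ * a) :
    m ^ (1 + 1 / (k + d/2)) ≤ ENNReal.ofReal (2 ^ (1 + 1/k) * κ ^ (1/k) + 2) * (Z + a) := by
  by_cases hZa : Z + a = ∞
  · rw [hZa, ENNReal.mul_top (by positivity)]; exact le_top
  obtain ⟨hZ, ha⟩ := ENNReal.add_ne_top.1 hZa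
  have hm : m ≠ ∞ := ne_top_of_le_ne_top (by finiteness) (H 1 one_pos)
  rw [← ENNReal.ofReal_toReal hm, ← ENNReal.ofReal_toReal hZ, ← ENNReal.ofReal_toReal ha] at H ⊢
  rw [ENNReal.ofReal_rpow_of_nonneg toReal_nonneg (by positivity),
    ← ENNReal.ofReal_add toReal_nonneg toReal_nonneg, ← ENNReal.ofReal_mul (by positivity)]
  refine ENNReal.ofReal_le_ofReal <| Real.rpow_le_of_forall_le_holder_add_tail hk hκ
    toReal_nonneg toReal_nonneg toReal_nonneg fun R hR => ?_
  have := H R hR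
  rwa [ENNReal.ofReal_rpow_of_nonneg toReal_nonneg (by positivity),
    ENNReal.ofReal_rpow_of_nonneg (by positivity) (by positivity),
    ← ENNReal.ofReal_mul (by positivity), ← ENNReal.ofReal_mul (by positivity),
    ← ENNReal.ofReal_add (by positivity) (by positivity),
    ENNReal.ofReal_le_ofReal_iff (by positivity)] at this

lemma setLIntegral_le_lintegral_rpow_mul_measure_rpow {α : Type*} [MeasurableSpace α]
    (μ : Measure α) {p q : ℝ} (hpq : p.HolderConjugate q) {g : α → ℝ≥0∞}
    (hg : AEMeasurable g μ) (s : Set α) :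
    ∫⁻ v in s, g v ∂μ ≤ (∫⁻ v, g v ^ p ∂μ) ^ (1 / p) * μ s ^ (1 / q) := by
  have := ENNReal.lintegral_mul_le_Lp_mul_Lq (μ.restrict s) hpq hg.restrict
    (aemeasurable_const (b := 1))
  simp only [Pi.mul_apply, mul_one, ENNReal.one_rpow, lintegral_const,
    Measure.restrict_apply_univ, one_mul] at this
  refine this.trans ?_
  gcongr
  · exact hpq.one_div_nonneg
  · exact Measure.restrict_le_self

lemma setLIntegral_compl_ball_le {E : Type*} [NormedAddCommGroup E] [MeasurableSpace E]
    [OpensMeasurableSpace E] (μ : Measure E) (g : E → ℝ≥0∞) {R : ℝ} (hR : 0 < R) :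
    ∫⁻ v in (ball 0 R)ᶜ, g v ∂μ ≤
      ENNReal.ofReal (R ^ 2)⁻¹ * ∫⁻ v, ENNReal.ofReal (‖v‖ ^ 2) * g v ∂μ := by
  calc ∫⁻ v in (ball 0 R)ᶜ, g v ∂μ
      ≤ ∫⁻ v in (ball 0 R)ᶜ, ENNReal.ofReal (R ^ 2)⁻¹ * (ENNReal.ofReal (‖v‖ ^ 2) * g v) ∂μ := by
        refine setLIntegral_mono' measurableSet_ball.compl fun v hv => ?_
        rw [Set.mem_compl_iff, mem_ball_zero_iff, not_lt] at hv
        rw [← mul_assoc, ← ENNReal.ofReal_mul (by positivity)]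
        refine le_mul_of_one_le_left' (ENNReal.one_le_ofReal.2 ?_)
        rw [inv_mul_eq_div, one_le_div (by positivity)]
        gcongr
    _ ≤ _ := by
        rw [lintegral_const_mul' _ _ ENNReal.ofReal_ne_top]
        gcongr
        exact Measure.restrict_le_self

lemma lintegral_rpow_le_kinetic_interpolation {E : Type*} [NormedAddCommGroup E]
    [NormedSpace ℝ E] [FiniteDimensional ℝ E] [MeasurableSpace E] [BorelSpace E]
    (μ : Measure E) [μ.IsAddHaarMeasure] {k : ℝ} (hk : 0 < k) {g : E → ℝ≥0∞}
    (hg : AEMeasurable g μ) :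
    (∫⁻ v, g v ∂μ) ^ (1 + 1 / (k + finrank ℝ E / 2)) ≤
      ENNReal.ofReal (2 ^ (1 + 1/k) * μ.real (ball 0 1) ^ (1/k) + 2) *
        (∫⁻ v, g v ^ (1 + 1/k) ∂μ + ∫⁻ v, ENNReal.ofReal (‖v‖ ^ 2) * g v ∂μ) := by
  have hpq : (1 + 1/k).HolderConjugate (k + 1) := by
    rw [Real.holderConjugate_iff]; constructor
    · have := one_div_pos.2 hk; linarith
    · field_simp
  refine ENNReal.rpow_le_of_forall_le_holder_add_tail hk measureReal_nonneg fun R hR => ?_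
  rw [← lintegral_add_compl _ (measurableSet_ball (x := 0) (ε := R))]
  gcongr
  · refine (setLIntegral_le_lintegral_rpow_mul_measure_rpow μ hpq hg _).trans_eq ?_
    rw [ENNReal.ofReal_mul (by positivity), ofReal_measureReal measure_ball_lt_top.ne,
      Measure.addHaar_ball_of_pos μ 0 hR]
  · exact setLIntegral_compl_ball_le μ g hR

lemma ofReal_rpow_le_add_of_casimir_lower_bound {Q : ℝ → ℝ → ℝ} {C F k : ℝ} (hC : 0 < C)
    (hk : 0 < k) (hQ1 : ∀ s P : ℝ, F ≤ s → C * s ^ (1 + 1/k) ≤ Q s P) {s : ℝ} (hs : 0 ≤ s)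
    (P : ℝ) :
    ENNReal.ofReal s ^ (1 + 1/k) ≤
      ENNReal.ofReal (F ^ (1/k)) * ENNReal.ofReal s +
        ENNReal.ofReal C⁻¹ * ENNReal.ofReal (Q s P) := by
  rw [ENNReal.ofReal_rpow_of_nonneg hs (by positivity)]
  rcases le_or_gt F s with hFs | hsF
  · refine le_add_left ?_
    rw [← ENNReal.ofReal_mul (inv_nonneg.2 hC.le)]
    exact ENNReal.ofReal_le_ofReal ((le_inv_mul_iff₀ hC).2 (hQ1 s P hFs))
  · refine le_add_right ?_
    have hF : 0 < F := hs.trans_lt hsF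
    rw [← ENNReal.ofReal_mul (by positivity), Real.rpow_one_add' hs (by positivity), mul_comm]
    gcongr

lemma lintegral_rpow_le_casimirL {Q : ℝ → ℝ → ℝ} {C F k : ℝ} (hC : 0 < C) (hk : 0 < k)
    (hQ1 : ∀ s P : ℝ, F ≤ s → C * s ^ (1 + 1/k) ≤ Q s P) {f : E3 × E3 → ℝ}
    (hf : Measurable f) (hf0 : ∀ z, 0 ≤ f z) :
    ∫⁻ z, ENNReal.ofReal (f z) ^ (1 + 1/k) ≤
      ENNReal.ofReal (F ^ (1/k)) * (∫⁻ z, ENNReal.ofReal (f z)) +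
        ENNReal.ofReal C⁻¹ * CasimirL Q f := by
  calc ∫⁻ z, ENNReal.ofReal (f z) ^ (1 + 1/k)
      ≤ ∫⁻ z, ENNReal.ofReal (F ^ (1/k)) * ENNReal.ofReal (f z) +
          ENNReal.ofReal C⁻¹ * ENNReal.ofReal (Q (f z) (angmom z)) :=
        lintegral_mono fun z => ofReal_rpow_le_add_of_casimir_lower_bound hC hk hQ1 (hf0 z) _
    _ = _ := by
        rw [lintegral_add_left (hf.ennreal_ofReal.const_mul _),
          lintegral_const_mul' _ _ ofReal_ne_top, lintegral_const_mul' _ _ ofReal_ne_top, CasimirL]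

lemma ofReal_add_mul_add_two_mul_le {α β : ℝ} (hα : 0 ≤ α) (hβ : 0 ≤ β) (x y : ℝ≥0∞) :
    ENNReal.ofReal α + ENNReal.ofReal β * x + 2 * y ≤
      ENNReal.ofReal (α + β + 2) * (1 + y + x) := by
  set S := ENNReal.ofReal (α + β + 2)
  calc ENNReal.ofReal α + ENNReal.ofReal β * x + 2 * y ≤ S + S * x + S * y := by
        gcongr <;> [skip; skip; rw [← ENNReal.ofReal_ofNat 2]] <;>
          exact ENNReal.ofReal_le_ofReal (by linarith)
    _ = S * (1 + y + x) := by ring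

theorem stmt1_general (Q : ℝ → ℝ → ℝ) (M C F k n : ℝ)
    (hM : 0 < M) (hC : 0 < C) (hF : 0 < F) (hk : 0 < k)
    (hQ1 : ∀ s P : ℝ, F ≤ s → C * s ^ (1 + 1/k) ≤ Q s P)
    (hn : n = k + 3/2) :
    ∃ C₂ : ℝ, 0 < C₂ ∧ ∀ f : E3 × E3 → ℝ, Measurable f → (∀ z, 0 ≤ f z) →
      (∫⁻ z : E3 × E3, ENNReal.ofReal (f z)) = ENNReal.ofReal M →
      (∫⁻ x : E3, (rhoL f x) ^ (1 + 1/n)) ≤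
        ENNReal.ofReal C₂ * (1 + EkinL f + CasimirL Q f) := by
  subst hn
  set c := 2 ^ (1 + 1/k) * volume.real (ball (0 : E3) 1) ^ (1/k) + 2
  refine ⟨c * (F ^ (1/k) * M + C⁻¹ + 2), by positivity, fun f hf hf0 hmass => ?_⟩
  have hslice (x : E3) : rhoL f x ^ (1 + 1/(k + 3/2)) ≤ ENNReal.ofReal c *
      ((∫⁻ v, ENNReal.ofReal (f (x, v)) ^ (1 + 1/k)) +
        ∫⁻ v, ENNReal.ofReal (‖v‖ ^ 2 * f (x, v))) := by
    have := lintegral_rpow_le_kinetic_interpolation volume hk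
      (g := fun v => ENNReal.ofReal (f (x, v))) (by fun_prop)
    simp_rw [finrank_euclideanSpace, Fintype.card_fin, Nat.cast_ofNat,
      ← ENNReal.ofReal_mul (sq_nonneg _)] at this
    exact this
  have hρ : Measurable fun z : E3 × E3 => ENNReal.ofReal (f z) ^ (1 + 1/k) := by fun_prop
  have hE : Measurable fun z : E3 × E3 => ENNReal.ofReal (‖z.2‖ ^ 2 * f z) := by fun_prop
  calc ∫⁻ x, rhoL f x ^ (1 + 1/(k + 3/2))
      ≤ ENNReal.ofReal c * ((∫⁻ z, ENNReal.ofReal (f z) ^ (1 + 1/k)) + 2 * EkinL f) := by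
        refine (lintegral_mono hslice).trans_eq ?_
        rw [lintegral_const_mul' _ _ ofReal_ne_top, lintegral_add_left hρ.lintegral_prod_right',
          EkinL, ← mul_assoc, ENNReal.mul_div_cancel two_ne_zero ofNat_ne_top, one_mul,
          Measure.volume_eq_prod, lintegral_prod _ hρ.aemeasurable,
          lintegral_prod _ hE.aemeasurable]
    _ ≤ ENNReal.ofReal c * (ENNReal.ofReal (F ^ (1/k)) * ENNReal.ofReal M +
          ENNReal.ofReal C⁻¹ * CasimirL Q f + 2 * EkinL f) := by
        rw [← hmass]
        gcongr
        exact lintegral_rpow_le_casimirL hC hk hQ1 hf hf0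
    _ ≤ ENNReal.ofReal (c * (F ^ (1/k) * M + C⁻¹ + 2)) * (1 + EkinL f + CasimirL Q f) := by
        rw [← ENNReal.ofReal_mul (by positivity), ENNReal.ofReal_mul (p := c) (by positivity),
          mul_assoc]
        gcongr
        exact ofReal_add_mul_add_two_mul_le (by positivity) (by positivity) _ _

/-- Under assumption (Q1), with n := k + 3/2 < 3, for every nonnegative measurable f
with total mass M one has ∫ ρ_f^{1+1/n} ≤ C₂ (1 + E_kin(f) + 𝒞(f)). -/
theorem stmt1 (Q : ℝ → ℝ → ℝ) (M C F k n : ℝ)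
    (hM : 0 < M) (hC : 0 < C) (hF : 0 < F) (hk : 0 < k) (hk32 : k < 3/2)
    (hQ1 : ∀ s P : ℝ, F ≤ s → C * s ^ (1 + 1/k) ≤ Q s P)
    (hn : n = k + 3/2) :
    ∃ C₂ : ℝ, 0 < C₂ ∧ ∀ f : E3 × E3 → ℝ, Measurable f → (∀ z, 0 ≤ f z) →
      (∫⁻ z : E3 × E3, ENNReal.ofReal (f z)) = ENNReal.ofReal M →
      (∫⁻ x : E3, (rhoL f x) ^ (1 + 1/n)) ≤
        ENNReal.ofReal C₂ * (1 + EkinL f + CasimirL Q f) :=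
  stmt1_general Q M C F k n hM hC hF hk hQ1 hn
end
end

section
/- Let Q : [0,∞)×ℝ → [0,∞) be continuous with Q(·,P) convex and continuously differentiable for each P, Q(0,·) = 0 = ∂_f Q(0,·), and ∂_f Q(·,P) : [0,∞) → [0,∞) a bijection for each P. Let U₀ : ℝ³ → ℝ be measurable, E(x,v) := ½|v|² + U₀(x), E₀ ∈ ℝ, and suppose f₀(x,v) = φ(E₀ − E(x,v), P(x,v)) where φ(s,P) := (∂_f Q(·,P))^{-1}(s) for s ≥ 0 and φ(s,P) := 0 for s < 0. Then for every nonnegative f ∈ L¹(ℝ⁶) with ∫∫ f dv dx = ∫∫ f₀ dv dx for which the integral below converges absolutely, d(f,f₀) := ∫∫ [ Q(f,P) − Q(f₀,P) + (E − E₀)(f − f₀) ] dv dx ≥ 0. -/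
/-!
Pointwise, the integrand is a Bregman-type remainder of the convex function `Q(·,P)`:
`Q(f) - Q(f₀) ≥ ∂_f Q(f₀)(f - f₀)`, so it is bounded below by `(∂_f Q(f₀) - s)(f - f₀)` with
`s = E₀ - E`. Where `s ≥ 0` the factor `∂_f Q(f₀) - s` vanishes by the choice of `f₀ = φ(s,P)`;
where `s < 0` one has `f₀ = 0`, `∂_f Q(0) = 0`, and the product is `-s · f ≥ 0`.
-/

open MeasureTheory Real Filter Topology

noncomputable section

def e3 (a b c : ℝ) : E3 := (WithLp.equiv 2 (Fin 3 → ℝ)).symm ![a, b, c]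

/-- induced spatial density ρ_f -/
def rho (f : E3 × E3 → ℝ) (x : E3) : ℝ := ∫ v : E3, f (x, v)

/-- kinetic energy -/
def Ekin (f : E3 × E3 → ℝ) : ℝ := (1/2) * ∫ z : E3 × E3, ‖z.2‖^2 * f z

/-- potential energy -/
def Epot (f : E3 × E3 → ℝ) : ℝ :=
  -(1/2) * ∫ x : E3, ∫ y : E3, rho f x * rho f y / ‖x - y‖

/-- Casimir functional 𝒞 -/
def Casimir (Q : ℝ → ℝ → ℝ) (f : E3 × E3 → ℝ) : ℝ :=
  ∫ z : E3 × E3, Q (f z) (angmom z)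

/-- energy-Casimir functional ℋ_C -/
def HC (Q : ℝ → ℝ → ℝ) (f : E3 × E3 → ℝ) : ℝ := Ekin f + Epot f + Casimir Q f

/-- rotation about the x₃-axis by angle θ -/
def rotZ (θ : ℝ) (x : E3) : E3 :=
  e3 (Real.cos θ * x 0 - Real.sin θ * x 1) (Real.sin θ * x 0 + Real.cos θ * x 1) (x 2)

/-- axial symmetry: invariance under all rotations about the x₃-axis -/
def AxiSym (f : E3 × E3 → ℝ) : Prop :=
  ∀ (θ : ℝ) (z : E3 × E3), f (rotZ θ z.1, rotZ θ z.2) = f z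

/-- membership in the constraint set ℱ_M -/
def MemFM (Q : ℝ → ℝ → ℝ) (M : ℝ) (f : E3 × E3 → ℝ) : Prop :=
  Integrable f ∧ (∀ z, 0 ≤ f z) ∧ (∫ z : E3 × E3, f z) = M ∧
    Integrable (fun z : E3 × E3 => ‖z.2‖^2 * f z) ∧
    Integrable (fun z : E3 × E3 => Q (f z) (angmom z))

/-- membership in the axially symmetric constraint set ℱ_M^S -/
def MemFMS (Q : ℝ → ℝ → ℝ) (M : ℝ) (f : E3 × E3 → ℝ) : Prop :=
  MemFM Q M f ∧ AxiSym f

/-- h_M = inf of ℋ_C over ℱ_M -/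
def hInf (Q : ℝ → ℝ → ℝ) (M : ℝ) : ℝ := sInf (HC Q '' {f | MemFM Q M f})

/-- h_M^S = inf of ℋ_C over ℱ_M^S -/
def hInfS (Q : ℝ → ℝ → ℝ) (M : ℝ) : ℝ := sInf (HC Q '' {f | MemFMS Q M f})

/-- induced gravitational potential U₀ of a state f₀ -/
def U0 (f0 : E3 × E3 → ℝ) (x : E3) : ℝ := -∫ y : E3, rho f0 y / ‖x - y‖

/-- particle energy E(x,v) = ½|v|² + U₀(x) -/
def Eng (f0 : E3 × E3 → ℝ) (z : E3 × E3) : ℝ := (1/2) * ‖z.2‖^2 + U0 f0 z.1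

/-- φ(s,P) = (∂_f Q(·,P))⁻¹(s) for s ≥ 0, and 0 for s < 0 -/
def phi (Qf : ℝ → ℝ → ℝ) (s P : ℝ) : ℝ :=
  if 0 ≤ s then Function.invFunOn (fun t => Qf t P) (Set.Ici 0) s else 0

open Set

lemma ConvexOn.add_mul_sub_le_of_hasDerivWithinAt {S : Set ℝ} {g : ℝ → ℝ} {g' a b : ℝ}
    (hg : ConvexOn ℝ S g) (ha : a ∈ S) (hb : b ∈ S) (hd : HasDerivWithinAt g g' S b) :
    g b + g' * (a - b) ≤ g a := by
  rcases lt_trichotomy a b with h | rfl | h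
  · have := hg.slope_le_of_hasDerivWithinAt ha hb h hd
    rw [slope_def_field, div_le_iff₀ (by linarith)] at this
    nlinarith
  · simp
  · have := hg.le_slope_of_hasDerivWithinAt hb ha h hd
    rw [slope_def_field, le_div_iff₀ (by linarith)] at this
    nlinarith

section phi

variable {Qf : ℝ → ℝ → ℝ} {s P : ℝ}

lemma phi_of_neg (hs : s < 0) : phi Qf s P = 0 := by
  rw [phi, if_neg hs.not_ge]

lemma phi_nonneg (hsurj : SurjOn (fun t => Qf t P) (Ici 0) (Ici 0)) : 0 ≤ phi Qf s P := by
  unfold phi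
  split_ifs with hs
  · exact Function.invFunOn_mem (hsurj hs)
  · exact le_rfl

lemma apply_phi_of_nonneg (hsurj : SurjOn (fun t => Qf t P) (Ici 0) (Ici 0)) (hs : 0 ≤ s) :
    Qf (phi Qf s P) P = s := by
  rw [phi, if_pos hs]
  exact Function.invFunOn_eq (f := fun t => Qf t P) (hsurj hs)

lemma sub_mul_sub_phi_nonneg (hsurj : SurjOn (fun t => Qf t P) (Ici 0) (Ici 0))
    (hQf0 : Qf 0 P = 0) {a : ℝ} (ha : 0 ≤ a) :
    0 ≤ (Qf (phi Qf s P) P - s) * (a - phi Qf s P) := by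
  rcases lt_or_ge s 0 with hs | hs
  · rw [phi_of_neg hs, hQf0]
    nlinarith
  · rw [apply_phi_of_nonneg hsurj hs, sub_self, zero_mul]

end phi

lemma sub_add_mul_sub_phi_nonneg {Q Qf' : ℝ → ℝ → ℝ} {P E E₀ a : ℝ}
    (hconv : ConvexOn ℝ (Ici 0) (fun t => Q t P))
    (hderiv : ∀ x, 0 ≤ x → HasDerivWithinAt (fun t => Q t P) (Qf' x P) (Ici 0) x)
    (hQf0 : Qf' 0 P = 0) (hsurj : SurjOn (fun t => Qf' t P) (Ici 0) (Ici 0)) (ha : 0 ≤ a) :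
    0 ≤ Q a P - Q (phi Qf' (E₀ - E) P) P + (E - E₀) * (a - phi Qf' (E₀ - E) P) := by
  set b := phi Qf' (E₀ - E) P
  have hb : 0 ≤ b := phi_nonneg hsurj
  have htangent : Q b P + Qf' b P * (a - b) ≤ Q a P :=
    hconv.add_mul_sub_le_of_hasDerivWithinAt ha hb (hderiv b hb)
  have hvar := sub_mul_sub_phi_nonneg (s := E₀ - E) hsurj hQf0 ha
  nlinarith

theorem stmt17_general (Q Qf' : ℝ → ℝ → ℝ)
    (hconv : ∀ P : ℝ, ConvexOn ℝ (Set.Ici 0) (fun s => Q s P))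
    (hQderiv : ∀ s P : ℝ, 0 ≤ s → HasDerivWithinAt (fun t => Q t P) (Qf' s P) (Set.Ici 0) s)
    (hQfzero : ∀ P : ℝ, Qf' 0 P = 0)
    (hbij : ∀ P : ℝ, Set.BijOn (fun s => Qf' s P) (Set.Ici 0) (Set.Ici 0))
    (W : E3 → ℝ) (E0 : ℝ) (f f0 : E3 × E3 → ℝ)
    (hf0def : ∀ z : E3 × E3,
      f0 z = phi Qf' (E0 - ((1/2) * ‖z.2‖^2 + W z.1)) (angmom z))
    (hnn : ∀ z, 0 ≤ f z) :
    0 ≤ ∫ z : E3 × E3,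
      (Q (f z) (angmom z) - Q (f0 z) (angmom z) +
        (((1/2) * ‖z.2‖^2 + W z.1) - E0) * (f z - f0 z)) :=
  integral_nonneg fun z => by
    rw [hf0def z]
    exact sub_add_mul_sub_phi_nonneg (hconv _) (fun t ht => hQderiv t _ ht) (hQfzero _)
      (hbij _).surjOn (hnn z)

/-- Nonnegativity of d(f,f₀): if f₀ = φ(E₀ − E, P) with φ(·,P) inverting the derivative
∂_f Q(·,P) of a convex Q, then d(f,f₀) = ∫∫ [Q(f,P) − Q(f₀,P) + (E − E₀)(f − f₀)] ≥ 0
for every nonnegative f ∈ L¹ with the same total mass as f₀. -/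
theorem stmt17 (Q Qf' : ℝ → ℝ → ℝ)
    (hQcont : ContinuousOn (fun p : ℝ × ℝ => Q p.1 p.2) (Set.Ici (0:ℝ) ×ˢ (Set.univ : Set ℝ)))
    (hconv : ∀ P : ℝ, ConvexOn ℝ (Set.Ici 0) (fun s => Q s P))
    (hQderiv : ∀ s P : ℝ, 0 ≤ s → HasDerivWithinAt (fun t => Q t P) (Qf' s P) (Set.Ici 0) s)
    (hQnonneg : ∀ s P : ℝ, 0 ≤ s → 0 ≤ Q s P)
    (hQzero : ∀ P : ℝ, Q 0 P = 0) (hQfzero : ∀ P : ℝ, Qf' 0 P = 0)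
    (hbij : ∀ P : ℝ, Set.BijOn (fun s => Qf' s P) (Set.Ici 0) (Set.Ici 0))
    (W : E3 → ℝ) (hW : Measurable W) (E0 : ℝ) (f f0 : E3 × E3 → ℝ)
    (hf0def : ∀ z : E3 × E3,
      f0 z = phi Qf' (E0 - ((1/2) * ‖z.2‖^2 + W z.1)) (angmom z))
    (hf : Integrable f) (hf0 : Integrable f0) (hnn : ∀ z, 0 ≤ f z)
    (hmass : (∫ z : E3 × E3, f z) = ∫ z : E3 × E3, f0 z)
    (hd : Integrable (fun z : E3 × E3 =>
      Q (f z) (angmom z) - Q (f0 z) (angmom z) +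
        (((1/2) * ‖z.2‖^2 + W z.1) - E0) * (f z - f0 z))) :
    0 ≤ ∫ z : E3 × E3,
      (Q (f z) (angmom z) - Q (f0 z) (angmom z) +
        (((1/2) * ‖z.2‖^2 + W z.1) - E0) * (f z - f0 z)) :=
  stmt17_general Q Qf' hconv hQderiv hQfzero hbij W E0 f f0 hf0def hnn
end
end
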